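/- arXiv:math/0702292 — 5 statements merged into one kernel-verified Lean document; each statement's English description precedes it below -/
import Mathlib

section
/- Let I be a linear order and (ā_t : t ∈ I) a family of tuples in the monster model, and B a set of parameters. If for each t ∈ I the type tp(ā_t, B ∪ ⋃{ā_s : s <_I t}) does not split over B, and these types are increasing in t (i.e. for s <_I t, tp(ā_t, B ∪ ⋃{ā_r : r <_I s}) extends tp(ā_s, B ∪ ⋃{ā_r : r <_I s}) after identifying variables), then (ā_t : t ∈ I) is an indiscernible sequence over B. -/
open FirstOrder FirstOrder.Language

universe u v w

/-- A first-order formula of `L` in free variables indexed by `α`, together with a finite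
tuple of parameters from `M` filling its parameter slots. -/
structure FP (L : FirstOrder.Language) (M : Type*) [L.Structure M] (α : Type*) where
  n : ℕ
  φ : L.Formula (α ⊕ Fin n)
  par : Fin n → M

variable {L : FirstOrder.Language} {M : Type*} [L.Structure M] {α β : Type*}

/-- The tuple `a` satisfies the formula-with-parameters `F`. -/
def FP.RealizeAt (F : FP L M α) (a : α → M) : Prop :=
  F.φ.Realize (Sum.elim a F.par)

/-- All parameters of `F` lie in the set `B`. -/
def FP.ParamsIn (F : FP L M α) (B : Set M) : Prop := ∀ i, F.par i ∈ B

/-- The negation of a formula-with-parameters. -/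
def FP.neg (F : FP L M α) : FP L M α := ⟨F.n, F.φ.not, F.par⟩

/-- `tp(a, A) = tp(b, A)` : the tuples `a` and `b` realize the same complete type over `A`. -/
def SameTypeOver (L : FirstOrder.Language) [L.Structure M] (A : Set M) (a b : α → M) : Prop :=
  ∀ F : FP L M α, F.ParamsIn A → (F.RealizeAt a ↔ F.RealizeAt b)

/-- `p` is a complete type over `B` in the variables `α`: all parameters come from `B`,
`p` decides every formula over `B`, and `p` is finitely satisfiable in the monster model `M`. -/
def IsCompleteTypeOver (B : Set M) (p : Set (FP L M α)) : Prop :=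
  (∀ F ∈ p, F.ParamsIn B) ∧
  (∀ F : FP L M α, F.ParamsIn B → (F ∈ p ↔ F.neg ∉ p)) ∧
  (∀ s : Finset (FP L M α), ↑s ⊆ p → ∃ a : α → M, ∀ F ∈ s, F.RealizeAt a)

/-- The (abstract) type `p` does not split over `A` : whenever `φ(x̄,b̄) ∈ p` and
`¬φ(x̄,c̄) ∈ p`, the parameter tuples `b̄, c̄` have different types over `A`. -/
def TypeDNSplit (A : Set M) (p : Set (FP L M α)) : Prop :=
  ∀ (n : ℕ) (φ : L.Formula (α ⊕ Fin n)) (b c : Fin n → M),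
    (⟨n, φ, b⟩ : FP L M α) ∈ p → (⟨n, φ.not, c⟩ : FP L M α) ∈ p →
    ¬ SameTypeOver L A b c

/-- `tp(a, D)` does not split over `A` : parameter tuples from `D` with the same type
over `A` satisfy the same formulas together with `a`. -/
def DNSplit (L : FirstOrder.Language) [L.Structure M] (A D : Set M) (a : α → M) : Prop :=
  ∀ (n : ℕ) (φ : L.Formula (α ⊕ Fin n)) (b c : Fin n → M),
    (∀ i, b i ∈ D) → (∀ i, c i ∈ D) → SameTypeOver L A b c →
    (φ.Realize (Sum.elim a b) ↔ φ.Realize (Sum.elim a c))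

/-- `(a t : t ∈ I)` is an indiscernible sequence over `B`. -/
def IsIndisc (L : FirstOrder.Language) [L.Structure M] {I : Type*} [LinearOrder I] (B : Set M) (a : I → α → M) : Prop :=
  ∀ (n : ℕ) (s t : Fin n → I), StrictMono s → StrictMono t →
    SameTypeOver L B (fun p : Fin n × α => a (s p.1) p.2)
      (fun p : Fin n × α => a (t p.1) p.2)

section Aux

/-- Realization of a formula only depends on its values at free variables. -/
theorem realize_congr_freeVar {γ : Type*} [DecidableEq γ] (φ : L.Formula γ)
    {v₁ v₂ : γ → M} (h : ∀ x ∈ BoundedFormula.freeVarFinset φ, v₁ x = v₂ x) :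
    φ.Realize v₁ ↔ φ.Realize v₂ := by
  have hsub : ↑(BoundedFormula.freeVarFinset φ) ⊆ (↑(BoundedFormula.freeVarFinset φ) : Set γ) :=
    subset_rfl
  have h1 := BoundedFormula.realize_restrictFreeVar' (M := M) (φ := φ) hsub (v := v₁)
    (xs := default)
  have h2 := BoundedFormula.realize_restrictFreeVar' (M := M) (φ := φ) hsub (v := v₂)
    (xs := default)
  have he : (v₁ ∘ (↑) : (↑(BoundedFormula.freeVarFinset φ) : Set γ) → M) = v₂ ∘ (↑) :=
    funext fun x => h x (by exact_mod_cast x.2)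
  rw [Formula.Realize, ← h1, he, h2]
  exact Iff.rfl

/-- Relabeling the `Fin (k+m)` variables of a formula to `Fin n × α` variables plus
parameters. -/
theorem reshape2 {n k m mG : ℕ} (ψ : L.Formula (Fin (k + m) ⊕ Fin mG))
    (par : Fin m → M) (parG : Fin mG → M) (pidx : Fin k → Fin n × α) :
    ∃ ψ' : L.Formula ((Fin n × α) ⊕ Fin (m + mG)),
      ∀ w : Fin n × α → M,
        ψ'.Realize (Sum.elim w (Sum.elim par parG ∘ ⇑finSumFinEquiv.symm)) ↔
          ψ.Realize (Sum.elim (Sum.elim (w ∘ pidx) par ∘ ⇑finSumFinEquiv.symm) parG) := by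
  refine ⟨ψ.relabel (Sum.elim
      (fun q => Sum.rec (fun qk => Sum.inl (pidx qk))
        (fun qm => Sum.inr (finSumFinEquiv (Sum.inl qm))) (finSumFinEquiv.symm q))
      (fun r => Sum.inr (finSumFinEquiv (Sum.inr r)))), fun w => ?_⟩
  rw [Formula.realize_relabel]
  apply iff_of_eq; congr 1
  funext v
  rcases v with q | r
  · simp only [Sum.elim_inl, Function.comp_apply]
    rcases hq : finSumFinEquiv.symm q with qk | qm <;> simp [hq]
  · simp

/-- Splitting off the last row of variables of a formula in `Fin (n+1) × α` variables:
the remaining free variables from the lower rows become finitely many parameter slots. -/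
theorem reshape1 {n m : ℕ} (φ : L.Formula ((Fin (n + 1) × α) ⊕ Fin m)) (par : Fin m → M) :
    ∃ (k : ℕ) (φ' : L.Formula (α ⊕ Fin (k + m))) (pidx : Fin k → Fin n × α),
      ∀ (w : Fin n × α → M) (x : α → M),
        φ'.Realize (Sum.elim x (Sum.elim (w ∘ pidx) par ∘ ⇑finSumFinEquiv.symm)) ↔
          φ.Realize (Sum.elim
            (fun p => Fin.lastCases (motive := fun _ => M) (x p.2)
              (fun i => w (i, p.2)) p.1) par) := by
  classical
  set S := BoundedFormula.freeVarFinset φ with hS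
  have hinj : Set.InjOn (fun p : Fin n × α => (Sum.inl (p.1.castSucc, p.2) :
      (Fin (n + 1) × α) ⊕ Fin m)) ((fun p : Fin n × α => (Sum.inl (p.1.castSucc, p.2) :
      (Fin (n + 1) × α) ⊕ Fin m)) ⁻¹' ↑S) := by
    intro p _ q _ h
    simp only [Sum.inl.injEq, Prod.mk.injEq, Fin.castSucc_inj] at h
    exact Prod.ext h.1 h.2
  set T : Finset (Fin n × α) :=
    S.preimage (fun p : Fin n × α => Sum.inl (p.1.castSucc, p.2)) hinj with hT
  set e := T.equivFin with he
  set g : ((Fin (n + 1) × α) ⊕ Fin m) → α ⊕ Fin (T.card + m) := Sum.elim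
    (fun p => Fin.lastCases (motive := fun _ => α ⊕ Fin (T.card + m)) (Sum.inl p.2)
      (fun i' => if h : (i', p.2) ∈ T then Sum.inr (finSumFinEquiv (Sum.inl (e ⟨(i', p.2), h⟩)))
        else Sum.inl p.2) p.1)
    (fun r => Sum.inr (finSumFinEquiv (Sum.inr r))) with hg
  refine ⟨T.card, φ.relabel g, fun q => (e.symm q : Fin n × α), fun w x => ?_⟩
  rw [Formula.realize_relabel]
  apply realize_congr_freeVar
  intro v hv
  rcases v with ⟨i, j⟩ | r
  · induction i using Fin.lastCases with
    | last => simp [hg]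
    | cast i' =>
      have hmem : (i', j) ∈ T := by
        rw [hT, Finset.mem_preimage]
        exact hv
      simp [hg, hmem]
  · simp [hg]

end Aux

/-- If `tp(a_t, B ∪ ⋃_{s<t} a_s)` does not split over `B` for each `t` and
these types are increasing in `t`, then `(a_t : t ∈ I)` is an indiscernible sequence
over `B`. -/
theorem statement_1 {L : FirstOrder.Language} {M : Type*} [L.Structure M]
    {I : Type*} [LinearOrder I] (B : Set M) {α : Type*} (a : I → α → M)
    (hns : ∀ t : I, DNSplit L B (B ∪ ⋃ s ∈ Set.Iio t, Set.range (a s)) (a t))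
    (hinc : ∀ s t : I, s < t →
      SameTypeOver L (B ∪ ⋃ r ∈ Set.Iio s, Set.range (a r)) (a t) (a s)) :
    IsIndisc L B a := by
  intro n
  induction n with
  | zero =>
    intro s t _ _
    have h : (fun p : Fin 0 × α => a (s p.1) p.2) = fun p => a (t p.1) p.2 :=
      funext fun p => p.1.elim0
    rw [h]
    exact fun F _ => Iff.rfl
  | succ n IH =>
    intro s t hs ht
    set u := max (s (Fin.last n)) (t (Fin.last n)) with hu
    have hconcat : ∀ s' : Fin (n + 1) → I,
        (fun p : Fin (n + 1) × α => a (s' p.1) p.2) =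
        fun p : Fin (n + 1) × α => Fin.lastCases (motive := fun _ => M)
          (a (s' (Fin.last n)) p.2) (fun i => a (s' i.castSucc) p.2) p.1 := by
      intro s'
      funext p
      obtain ⟨i, j⟩ := p
      induction i using Fin.lastCases <;> simp
    -- Claim A: we can replace the last element by `a u`
    have keyA : ∀ s' : Fin (n + 1) → I, StrictMono s' → s' (Fin.last n) ≤ u →
        ∀ F : FP L M (Fin (n + 1) × α), F.ParamsIn B →
        (F.RealizeAt (fun p => a (s' p.1) p.2) ↔
          F.φ.Realize (Sum.elim (fun p : Fin (n + 1) × α =>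
            Fin.lastCases (motive := fun _ => M) (a u p.2)
              (fun i => a (s' i.castSucc) p.2) p.1) F.par)) := by
      intro s' hs' hsu F hF
      obtain ⟨k, φ', pidx, hR⟩ := reshape1 F.φ F.par
      have h1 : F.RealizeAt (fun p => a (s' p.1) p.2) ↔
          φ'.Realize (Sum.elim (a (s' (Fin.last n)))
            (Sum.elim ((fun p : Fin n × α => a (s' p.1.castSucc) p.2) ∘ pidx) F.par ∘
              ⇑finSumFinEquiv.symm)) := by
        rw [FP.RealizeAt, hconcat s']
        exact (hR (fun p : Fin n × α => a (s' p.1.castSucc) p.2) (a (s' (Fin.last n)))).symm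
      have h2 : F.φ.Realize (Sum.elim (fun p : Fin (n + 1) × α =>
            Fin.lastCases (motive := fun _ => M) (a u p.2)
              (fun i => a (s' i.castSucc) p.2) p.1) F.par) ↔
          φ'.Realize (Sum.elim (a u)
            (Sum.elim ((fun p : Fin n × α => a (s' p.1.castSucc) p.2) ∘ pidx) F.par ∘
              ⇑finSumFinEquiv.symm)) :=
        (hR (fun p : Fin n × α => a (s' p.1.castSucc) p.2) (a u)).symm
      rw [h1, h2]
      rcases eq_or_lt_of_le hsu with heq | hlt
      · rw [heq]
      · have ST := hinc (s' (Fin.last n)) u hlt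
        have hmain := ST ⟨k + F.n, φ',
            Sum.elim ((fun p : Fin n × α => a (s' p.1.castSucc) p.2) ∘ pidx) F.par ∘
              ⇑finSumFinEquiv.symm⟩ ?_
        · exact hmain.symm
        · intro i
          rcases hFS : finSumFinEquiv.symm i with qk | qm
          · show Sum.elim _ _ (finSumFinEquiv.symm i) ∈ _
            rw [hFS]
            exact Or.inr (Set.mem_biUnion (hs' (Fin.castSucc_lt_last (pidx qk).1))
              ⟨(pidx qk).2, rfl⟩)
          · show Sum.elim _ _ (finSumFinEquiv.symm i) ∈ _
            rw [hFS]
            exact Or.inl (hF qm)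
    intro F hF
    have A1 := keyA s hs (le_max_left _ _) F hF
    have A2 := keyA t ht (le_max_right _ _) F hF
    -- Claim B: the two middle tuples realize the same formulas, by non-splitting
    obtain ⟨k, φ', pidx, hR⟩ := reshape1 F.φ F.par
    have hmemb : ∀ (s' : Fin (n + 1) → I), StrictMono s' → s' (Fin.last n) ≤ u →
        ∀ i, (Sum.elim ((fun p : Fin n × α => a (s' p.1.castSucc) p.2) ∘ pidx) F.par ∘
          ⇑finSumFinEquiv.symm) i ∈ B ∪ ⋃ r ∈ Set.Iio u, Set.range (a r) := by
      intro s' hs' hsu i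
      rcases hFS : finSumFinEquiv.symm i with qk | qm
      · show Sum.elim _ _ (finSumFinEquiv.symm i) ∈ _
        rw [hFS]
        exact Or.inr (Set.mem_biUnion
          (lt_of_lt_of_le (hs' (Fin.castSucc_lt_last (pidx qk).1)) hsu)
          ⟨(pidx qk).2, rfl⟩)
      · show Sum.elim _ _ (finSumFinEquiv.symm i) ∈ _
        rw [hFS]
        exact Or.inl (hF qm)
    have hsame : SameTypeOver L B
        (Sum.elim ((fun p : Fin n × α => a (s p.1.castSucc) p.2) ∘ pidx) F.par ∘
          ⇑finSumFinEquiv.symm)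
        (Sum.elim ((fun p : Fin n × α => a (t p.1.castSucc) p.2) ∘ pidx) F.par ∘
          ⇑finSumFinEquiv.symm) := by
      intro G hG
      obtain ⟨ψ', hψ⟩ := reshape2 G.φ F.par G.par pidx
      have hIH := IH (fun i => s i.castSucc) (fun i => t i.castSucc)
        (hs.comp Fin.strictMono_castSucc) (ht.comp Fin.strictMono_castSucc)
        ⟨F.n + G.n, ψ', Sum.elim F.par G.par ∘ ⇑finSumFinEquiv.symm⟩ ?_
      · exact (hψ (fun p : Fin n × α => a (s p.1.castSucc) p.2)).symm.trans
          (hIH.trans (hψ (fun p : Fin n × α => a (t p.1.castSucc) p.2)))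
      · intro i
        rcases hFS : finSumFinEquiv.symm i with qm | qg
        · show Sum.elim _ _ (finSumFinEquiv.symm i) ∈ _
          rw [hFS]
          exact hF qm
        · show Sum.elim _ _ (finSumFinEquiv.symm i) ∈ _
          rw [hFS]
          exact hG qg
    have hD := hns u (k + F.n) φ'
      (Sum.elim ((fun p : Fin n × α => a (s p.1.castSucc) p.2) ∘ pidx) F.par ∘
        ⇑finSumFinEquiv.symm)
      (Sum.elim ((fun p : Fin n × α => a (t p.1.castSucc) p.2) ∘ pidx) F.par ∘
        ⇑finSumFinEquiv.symm)
      (hmemb s hs (le_max_left _ _)) (hmemb t ht (le_max_right _ _)) hsame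
    have Bmid : F.φ.Realize (Sum.elim (fun p : Fin (n + 1) × α =>
          Fin.lastCases (motive := fun _ => M) (a u p.2)
            (fun i => a (s i.castSucc) p.2) p.1) F.par) ↔
        F.φ.Realize (Sum.elim (fun p : Fin (n + 1) × α =>
          Fin.lastCases (motive := fun _ => M) (a u p.2)
            (fun i => a (t i.castSucc) p.2) p.1) F.par) :=
      ((hR (fun p : Fin n × α => a (s p.1.castSucc) p.2) (a u)).symm).trans
        (hD.trans (hR (fun p : Fin n × α => a (t p.1.castSucc) p.2) (a u)))
    exact A1.trans (Bmid.trans A2.symm)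
end

section
/- If tp(ā, B) does not split over A ⊆ B, the sequence (b̄_t : t ∈ I) is an indiscernible sequence over A, and each b̄_t is a tuple from B, then (b̄_t : t ∈ I) is an indiscernible sequence over A ∪ ā (i.e. over A together with the range of ā). -/
open FirstOrder FirstOrder.Language

universe u v w

variable {L : FirstOrder.Language} {M : Type*} [L.Structure M] {α β : Type*}

lemma sameTypeOver_comp {A : Set M} {γ : Type*} {c d : γ → M}
    (h : SameTypeOver L A c d) {k : ℕ} (f : Fin k → γ ⊕ M)
    (hf : ∀ i x, f i = Sum.inr x → x ∈ A) :
    SameTypeOver L A (fun i => (f i).elim c id) (fun i => (f i).elim d id) := by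
  classical
  intro F hF
  let σ := {i : Fin k // ∃ x, f i = Sum.inr x}
  haveI : Fintype σ := Fintype.ofFinite σ
  let e : Fin F.n ⊕ σ ≃ Fin (F.n + Fintype.card σ) :=
    (Equiv.sumCongr (Equiv.refl _) (Fintype.equivFin σ)).trans finSumFinEquiv
  let ρ : Fin k ⊕ Fin F.n → γ ⊕ Fin (F.n + Fintype.card σ) :=
    Sum.elim
      (fun i => if h2 : ∃ x, f i = Sum.inr x then Sum.inr (e (Sum.inr ⟨i, h2⟩))
        else Sum.inl (Classical.choose (show ∃ j, f i = Sum.inl j by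
          cases hfi : f i with
          | inl j => exact ⟨j, rfl⟩
          | inr x => exact absurd ⟨x, hfi⟩ h2)))
      (fun s => Sum.inr (e (Sum.inl s)))
  let q' : Fin (F.n + Fintype.card σ) → M :=
    fun j => Sum.elim F.par (fun i : σ => Classical.choose i.2) (e.symm j)
  have hq' : ∀ j, q' j ∈ A := by
    intro j
    rcases hsj : e.symm j with s | i
    · simpa [q', hsj] using hF s
    · simp only [q', hsj, Sum.elim_inr]
      exact hf i.1 _ (Classical.choose_spec i.2)
  have key : ∀ cc : γ → M, Sum.elim cc q' ∘ ρ = Sum.elim (fun i => (f i).elim cc id) F.par := by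
    intro cc
    funext x
    rcases x with i | s
    · by_cases h2 : ∃ x, f i = Sum.inr x
      · simp only [Function.comp_apply, ρ, Sum.elim_inl, dif_pos h2, Sum.elim_inr, q',
          Equiv.symm_apply_apply]
        rw [congrArg (Sum.elim cc id) (Classical.choose_spec h2)]
        rfl
      · simp only [Function.comp_apply, ρ, Sum.elim_inl, dif_neg h2]
        have h3 : ∃ j, f i = Sum.inl j := by
          cases hfi : f i with
          | inl j => exact ⟨j, rfl⟩
          | inr x => exact absurd ⟨x, hfi⟩ h2
        rw [congrArg (Sum.elim cc id) (Classical.choose_spec h3)]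
        rfl
    · simp [ρ, q', Equiv.symm_apply_apply]
  have := h ⟨F.n + Fintype.card σ, F.φ.relabel ρ, q'⟩ hq'
  simp only [FP.RealizeAt, Formula.realize_relabel] at this ⊢
  rw [key c, key d] at this
  exact this


/-- If `tp(a, B)` does not split over `A ⊆ B`, `(b_t : t ∈ I)` is an
indiscernible sequence over `A`, and each `b_t` is a tuple from `B`, then `(b_t : t ∈ I)`
is indiscernible over `A ∪ range a`. -/
theorem statement_2 {L : FirstOrder.Language} {M : Type*} [L.Structure M]
    {I : Type*} [LinearOrder I] (A B : Set M) (hAB : A ⊆ B)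
    {α β : Type*} (a : α → M) (hns : DNSplit L A B a)
    (b : I → β → M) (hb : ∀ t i, b t i ∈ B)
    (hind : IsIndisc L A b) :
    IsIndisc L (A ∪ Set.range a) b := by
  classical
  intro m s t hs ht F hF
  obtain ⟨n, φ0, par⟩ := F
  by_cases hne : Nonempty (Fin m × β)
  case neg =>
    have hcc : (fun p : Fin m × β => b (s p.1) p.2) = fun p => b (t p.1) p.2 :=
      funext fun p => absurd ⟨p⟩ hne
    rw [show ({ n := n, φ := φ0, par := par } : FP L M (Fin m × β)).RealizeAt
        (fun p => b (s p.1) p.2) = ({ n := n, φ := φ0, par := par } : FP L M (Fin m × β)).RealizeAt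
        (fun p => b (t p.1) p.2) from congrArg _ hcc]
  case pos =>
    obtain ⟨p0⟩ := hne
    have hFi : ∀ i, par i ∈ A ∪ Set.range a := hF
    have hFi2 := hFi
    set u : Finset ((Fin m × β) ⊕ Fin n) := φ0.freeVarFinset with hu
    have hsub : ↑φ0.freeVarFinset ⊆ (↑u : Set ((Fin m × β) ⊕ Fin n)) := subset_rfl
    set ψ : L.Formula ↥(↑u : Set ((Fin m × β) ⊕ Fin n)) := φ0.restrictFreeVar (Set.inclusion hsub) with hψdef
    have hψ : ∀ w : ((Fin m × β) ⊕ Fin n) → M, ψ.Realize (w ∘ (↑)) ↔ φ0.Realize w := fun w =>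
      BoundedFormula.realize_restrictFreeVar' hsub
    set k := Fintype.card ↥(↑u : Set ((Fin m × β) ⊕ Fin n)) with hk
    set eU : ↥(↑u : Set ((Fin m × β) ⊕ Fin n)) ≃ Fin k := Fintype.equivFin _ with heU
    have hrng : ∀ i, par i ∉ A → ∃ j, a j = par i := fun i h2 =>
      Set.mem_range.mp (((Set.mem_union _ _ _).mp (hFi i)).resolve_left h2)
    set ρ : ↥(↑u : Set ((Fin m × β) ⊕ Fin n)) → α ⊕ Fin k := fun v =>
      Sum.elim (fun _ : Fin m × β => Sum.inr (eU v))
        (fun i => if h2 : par i ∈ A then Sum.inr (eU v)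
          else Sum.inl (Classical.choose (hrng i h2)))
        v.1 with hρ
    set val : ((Fin m × β) → M) → ((Fin m × β) ⊕ Fin n) → M := fun cc =>
      Sum.elim cc (fun i => if par i ∈ A then par i else cc p0) with hval
    set Bs : Fin k → M := fun q => val (fun p => b (s p.1) p.2) (eU.symm q).1 with hBs
    set Bt : Fin k → M := fun q => val (fun p => b (t p.1) p.2) (eU.symm q).1 with hBt
    have hvalB : ∀ (r : Fin m → I), ∀ x : (Fin m × β) ⊕ Fin n, val (fun p => b (r p.1) p.2) x ∈ B := by
      intro r x
      rcases x with p | i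
      · simpa only [hval, Sum.elim_inl] using hb (r p.1) p.2
      · by_cases h2 : par i ∈ A
        · simpa only [hval, Sum.elim_inr, if_pos h2] using hAB h2
        · simpa only [hval, Sum.elim_inr, if_neg h2] using hb (r p0.1) p0.2
    have hBsB : ∀ q, Bs q ∈ B := fun q => hvalB s _
    have hBtB : ∀ q, Bt q ∈ B := fun q => hvalB t _
    -- same type over A of the parameter tuples
    set f : Fin k → (Fin m × β) ⊕ M := fun q =>
      Sum.elim (fun p => Sum.inl p)
        (fun i => if par i ∈ A then Sum.inr (par i) else Sum.inl p0) (eU.symm q).1 with hfd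
    have hf : ∀ q x, f q = Sum.inr x → x ∈ A := by
      intro q x hx
      rcases hv : ((eU.symm q : ↥(↑u : Set ((Fin m × β) ⊕ Fin n))) : (Fin m × β) ⊕ Fin n) with p | i
      · simp only [hfd, hv, Sum.elim_inl] at hx
        exact absurd hx Sum.inl_ne_inr
      · by_cases h2 : par i ∈ A
        · simp only [hfd, hv, Sum.elim_inr, if_pos h2, Sum.inr.injEq] at hx
          exact hx ▸ h2
        · simp only [hfd, hv, Sum.elim_inr, if_neg h2] at hx
          exact absurd hx Sum.inl_ne_inr
    have hcomp := sameTypeOver_comp (hind m s t hs ht) f hf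
    have hfold : ∀ (r : Fin m → I),
        (fun q => (f q).elim (fun p : Fin m × β => b (r p.1) p.2) id) =
          fun q => val (fun p => b (r p.1) p.2) (eU.symm q).1 := by
      intro r
      funext q
      rcases hv : ((eU.symm q : ↥(↑u : Set ((Fin m × β) ⊕ Fin n))) : (Fin m × β) ⊕ Fin n) with p | i
      · simp only [hfd, hv, hval, Sum.elim_inl]
      · by_cases h2 : par i ∈ A
        · simp only [hfd, hv, hval, Sum.elim_inr, if_pos h2]
          rfl
        · simp only [hfd, hv, hval, Sum.elim_inr, if_neg h2]
          rfl
    rw [hfold s, hfold t] at hcomp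
    have main := hns k (ψ.relabel ρ) Bs Bt hBsB hBtB hcomp
    rw [Formula.realize_relabel, Formula.realize_relabel] at main
    have key : ∀ (r : Fin m → I) (Br : Fin k → M),
        Br = (fun q => val (fun p => b (r p.1) p.2) (eU.symm q).1) →
        Sum.elim a Br ∘ ρ =
          Sum.elim (fun p : Fin m × β => b (r p.1) p.2) par ∘ ((↑) : ↥(↑u : Set ((Fin m × β) ⊕ Fin n)) → (Fin m × β) ⊕ Fin n) := by
      intro r Br hBr
      funext v
      show Sum.elim a Br (ρ v) = Sum.elim (fun p : Fin m × β => b (r p.1) p.2) par v.1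
      rcases hv : (v : (Fin m × β) ⊕ Fin n) with p | i
      · simp only [hρ, hBr, hv, Sum.elim_inl, Sum.elim_inr, Equiv.symm_apply_apply]
        simp only [hval, Sum.elim_inl]
      · by_cases h2 : par i ∈ A
        · simp only [hρ, hBr, hv, Sum.elim_inr, dif_pos h2, Equiv.symm_apply_apply]
          simp only [hval, Sum.elim_inr, if_pos h2]
        · simp only [hρ, hv, Sum.elim_inr, dif_neg h2, Sum.elim_inl]
          exact Classical.choose_spec (hrng i h2)
    rw [key s Bs hBs, key t Bt hBt] at main
    show φ0.Realize (Sum.elim (fun p : Fin m × β => b (s p.1) p.2) par) ↔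
      φ0.Realize (Sum.elim (fun p : Fin m × β => b (t p.1) p.2) par)
    rw [← hψ _, ← hψ _]
    exact main
end

section
/- Let T be a complete first-order theory whose language contains a binary relation R such that T proves: (a) (∃y)(∀x)(¬ xRy) (the empty set is coded), and (b) (∀x,y)(∃y₁)(∀x₁)(x₁Ry₁ ↔ (x₁Ry ∨ x₁ = x)) (one can add one element to a coded set). Then for every singular cardinal κ, every κ-saturated model M of T is κ⁺-saturated; in particular T has no exactly κ-saturated model for singular κ. -/
open FirstOrder FirstOrder.Language

universe u v w

variable {L : FirstOrder.Language} {M : Type*} [L.Structure M] {α β : Type*}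

/-- `M` is `κ`-saturated: every finitely satisfiable `1`-type over a subset of `M` of
cardinality `< κ` is realized in `M`. -/
def KSat (L : FirstOrder.Language) (M : Type w) [L.Structure M] (κ : Cardinal.{w}) : Prop :=
  ∀ (A : Set M) (p : Set (FP L M Unit)),
    Cardinal.mk A < κ → (∀ F ∈ p, F.ParamsIn A) →
    (∀ s : Finset (FP L M Unit), ↑s ⊆ p → ∃ x : M, ∀ F ∈ s, F.RealizeAt fun _ => x) →
    ∃ x : M, ∀ F ∈ p, F.RealizeAt fun _ => x

namespace ChangAux

variable (R : L.Relations 2)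

def memFP (c : M) : FP L M Unit :=
  ⟨1, R.formula₂ (Term.var (Sum.inl ())) (Term.var (Sum.inr 0)), ![c]⟩

@[simp] lemma realize_memFP {c x : M} :
    (memFP R c).RealizeAt (fun _ => x) ↔ Structure.RelMap R ![x, c] := by
  simp [memFP, FP.RealizeAt]

def inFP (b : M) : FP L M Unit :=
  ⟨1, R.formula₂ (Term.var (Sum.inr 0)) (Term.var (Sum.inl ())), ![b]⟩

@[simp] lemma realize_inFP {b y : M} :
    (inFP R b).RealizeAt (fun _ => y) ↔ Structure.RelMap R ![b, y] := by
  simp [inFP, FP.RealizeAt]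

lemma inFP_par_eq {b b' : M} (h : inFP R b = inFP R b') : b = b' := by
  simp only [inFP, FP.mk.injEq, heq_eq_eq, true_and] at h
  simpa using congrFun h 0

def gFP (F : FP L M Unit) : FP L M Unit :=
  ⟨F.n, BoundedFormula.all
    ((R.boundedFormula₂ (Term.var (Sum.inr 0)) (Term.var (Sum.inl (Sum.inl ())))).imp
      ((BoundedFormula.relabel (Sum.elim (fun _ => Sum.inr 0) (fun j => Sum.inl (Sum.inr j))) F.φ : L.BoundedFormula (Unit ⊕ Fin F.n) 1))),
    F.par⟩

lemma realize_gFP {F : FP L M Unit} {c : M} :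
    (gFP R F).RealizeAt (fun _ => c) ↔
      ∀ z : M, Structure.RelMap R ![z, c] → F.RealizeAt (fun _ => z) := by
  simp only [gFP, FP.RealizeAt, Formula.Realize, BoundedFormula.realize_all,
    BoundedFormula.realize_imp, BoundedFormula.realize_rel₂, BoundedFormula.realize_relabel,
    Term.realize_var, Sum.elim_inr, Sum.elim_inl]
  refine forall_congr' fun a => ?_
  have h0 : (Fin.snoc (default : Fin 0 → M) a : Fin 1 → M) 0 = a := by simp [Fin.snoc]
  have h1 : (Sum.elim (Sum.elim (fun _ : Unit => c) F.par) ((Fin.snoc (default : Fin 0 → M) a : Fin 1 → M) ∘ Fin.castAdd 0) ∘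
      Sum.elim (fun _ => Sum.inr 0) (fun j => Sum.inl (Sum.inr j)) : Unit ⊕ Fin F.n → M)
      = Sum.elim (fun _ => a) F.par := by
    funext x
    rcases x with x | j
    · simp [Fin.snoc]
    · simp
  have h2 : (Fin.snoc (default : Fin 0 → M) a ∘ Fin.natAdd 1) = (default : Fin 0 → M) := by
    funext i; exact i.elim0
  rw [h0, h1, h2]

lemma exists_code (ha : ∃ y : M, ∀ x : M, ¬ Structure.RelMap R ![x, y])
    (hb : ∀ x y : M, ∃ y₁ : M, ∀ x₁ : M,
      Structure.RelMap R ![x₁, y₁] ↔ (Structure.RelMap R ![x₁, y] ∨ x₁ = x)) :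
    ∀ l : List M, ∃ c : M, ∀ x : M, Structure.RelMap R ![x, c] ↔ x ∈ l := by
  intro l
  induction l with
  | nil =>
    obtain ⟨y, hy⟩ := ha
    exact ⟨y, fun x => by simp [hy x]⟩
  | cons a l ih =>
    obtain ⟨c, hc⟩ := ih
    obtain ⟨c', hc'⟩ := hb a c
    refine ⟨c', fun x => ?_⟩
    rw [hc' x, hc x, List.mem_cons, or_comm]

end ChangAux

open ChangAux Cardinal Set

/-- Chang's trick. Suppose the binary relation `R` codes the empty
set and allows adding one element to a coded set. Then for every singular cardinal `κ`,
every `κ`-saturated model is `κ⁺`-saturated. -/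
theorem statement_11 {L : FirstOrder.Language} {M : Type w} [L.Structure M]
    (R : L.Relations 2)
    (ha : ∃ y : M, ∀ x : M, ¬ Structure.RelMap R ![x, y])
    (hb : ∀ x y : M, ∃ y₁ : M, ∀ x₁ : M,
      Structure.RelMap R ![x₁, y₁] ↔ (Structure.RelMap R ![x₁, y] ∨ x₁ = x))
    (κ : Cardinal.{w}) (hκ : Cardinal.aleph0 ≤ κ) (hsing : ¬ κ.IsRegular)
    (hMsat : KSat L M κ) :
    KSat L M (Order.succ κ) := by
  classical
  intro A p hA hpar hfs
  by_cases hlt : Cardinal.mk A < κ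
  · exact hMsat A p hlt hpar hfs
  have hAκ : Cardinal.mk A = κ := le_antisymm (Order.lt_succ_iff.mp hA) (not_lt.mp hlt)
  -- the index type
  have hmkι : Cardinal.mk κ.ord.ToType = κ := by rw [Cardinal.mk_toType, Cardinal.card_ord]
  have hκ0 : κ ≠ 0 := (aleph0_pos.trans_le hκ).ne'
  have hnι : Nonempty κ.ord.ToType := by
    rw [← Cardinal.mk_ne_zero_iff, hmkι]; exact hκ0
  obtain ⟨e⟩ : Nonempty (κ.ord.ToType ≃ A) := Cardinal.eq.mp (by rw [hmkι, hAκ])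
  -- a small cofinal set of indices
  have hcof : κ.ord.cof < κ := by
    rcases lt_or_ge κ.ord.cof κ with h | h
    · exact h
    · exact absurd ⟨hκ, h⟩ hsing
  haveI : IsWellOrder κ.ord.ToType (· < ·) := isWellOrder_lt
  obtain ⟨S, hSub, hScard⟩ := Order.exists_cof_eq κ.ord.ToType
  rw [Ordinal.cof_toType] at hScard
  have hSsmall : Cardinal.mk S < κ := by rw [hScard]; exact hcof
  -- upper bounds in S for finite sets of indices
  have hub : ∀ t : Finset κ.ord.ToType, ∃ j ∈ S, ∀ i ∈ t, i ≤ j := by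
    intro t
    rcases t.eq_empty_or_nonempty with rfl | hne
    · obtain ⟨j, hjS, -⟩ := hSub (Classical.arbitrary κ.ord.ToType)
      exact ⟨j, hjS, by simp⟩
    · obtain ⟨j, hjS, hj⟩ := hSub (t.max' hne)
      exact ⟨j, hjS, fun i hi => (t.le_max' i hi).trans hj⟩
  -- slices of A
  set Aset : κ.ord.ToType → Set M := fun i => (fun y : κ.ord.ToType => (e y : M)) '' {y | y ≤ i} with hAset
  have hAset_mono : ∀ {i j : κ.ord.ToType}, i ≤ j → Aset i ⊆ Aset j := by
    rintro i j hij _ ⟨y, hy, rfl⟩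
    exact ⟨y, le_trans hy hij, rfl⟩
  have hAset_small : ∀ i, Cardinal.mk (Aset i) < κ := by
    intro i
    have h1 : Cardinal.mk {y : κ.ord.ToType | y < i} < κ := Cardinal.mk_Iio_toType_ord_lt i
    have h3 : Cardinal.mk (Aset i) ≤ Cardinal.mk {y : κ.ord.ToType | y ≤ i} := mk_image_le
    have h4 : Cardinal.mk {y : κ.ord.ToType | y ≤ i} ≤ Cardinal.mk {y : κ.ord.ToType | y < i} + 1 := by
      have : {y : κ.ord.ToType | y ≤ i} ⊆ insert i {y : κ.ord.ToType | y < i} := by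
        intro y hy
        simp only [Set.mem_setOf_eq] at hy
        rcases lt_or_eq_of_le hy with h | h
        · exact Set.mem_insert_of_mem _ h
        · rw [h]; exact Set.mem_insert _ _
      exact le_trans (mk_le_mk_of_subset this) (mk_insert_le)
    have h5 : Cardinal.mk {y : κ.ord.ToType | y < i} + 1 < κ :=
      Cardinal.add_lt_of_lt hκ h1 (one_lt_aleph0.trans_le hκ)
    exact lt_of_le_of_lt (le_trans h3 h4) h5
  -- slices of p
  set psub : κ.ord.ToType → Set (FP L M Unit) := fun i => {F | F ∈ p ∧ F.ParamsIn (Aset i)} with hpsub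
  have hpsub_mono : ∀ {i j : κ.ord.ToType}, i ≤ j → psub i ⊆ psub j := by
    rintro i j hij F ⟨hFp, hFpar⟩
    exact ⟨hFp, fun t => hAset_mono hij (hFpar t)⟩
  have hcover : ∀ F ∈ p, ∃ j ∈ S, F ∈ psub j := by
    intro F hF
    obtain ⟨j, hjS, hj⟩ := hub (Finset.univ.image fun t => e.symm ⟨F.par t, hpar F hF t⟩)
    refine ⟨j, hjS, hF, fun t => ?_⟩
    refine ⟨e.symm ⟨F.par t, hpar F hF t⟩, hj _ (Finset.mem_image_of_mem _ (Finset.mem_univ t)), ?_⟩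
    simp
  -- realizations of the slices
  have hb_ex : ∀ j : κ.ord.ToType, ∃ x : M, ∀ F ∈ psub j, F.RealizeAt fun _ => x := fun j =>
    hMsat (Aset j) (psub j) (hAset_small j) (fun F hF => hF.2)
      (fun s hs => hfs s fun F hF => (hs hF).1)
  choose b hbspec using hb_ex
  have hcode := exists_code R ha hb
  -- stage codes
  have hc_ex : ∀ i ∈ S, ∃ y : M,
      (∀ F ∈ psub i, ∀ z : M, Structure.RelMap R ![z, y] → F.RealizeAt fun _ => z) ∧
      (∀ j ∈ S, i ≤ j → Structure.RelMap R ![b j, y]) := by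
    intro i hiS
    set Γ : Set (FP L M Unit) :=
      (gFP R '' psub i) ∪ ((fun j => inFP R (b j)) '' {j | j ∈ S ∧ i ≤ j}) with hΓ
    set P : Set M := Aset i ∪ (b '' {j | j ∈ S ∧ i ≤ j}) with hP
    have hPsmall : Cardinal.mk P < κ := by
      refine lt_of_le_of_lt (mk_union_le _ _) (Cardinal.add_lt_of_lt hκ (hAset_small i) ?_)
      refine lt_of_le_of_lt mk_image_le (lt_of_le_of_lt (mk_le_mk_of_subset ?_) hSsmall)
      exact fun j hj => hj.1
    have hΓpar : ∀ F ∈ Γ, F.ParamsIn P := by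
      rintro F (⟨F₀, hF₀, rfl⟩ | ⟨j, hj, rfl⟩)
      · exact fun t => Or.inl (hF₀.2 t)
      · show (inFP R (b j)).ParamsIn P
        simp only [inFP, FP.ParamsIn]
        intro t
        have ht : t = 0 := Subsingleton.elim t 0
        rw [ht]
        simp only [Matrix.cons_val_zero]
        exact Or.inr ⟨j, hj, rfl⟩
    have hΓfs : ∀ s : Finset (FP L M Unit), ↑s ⊆ Γ →
        ∃ x : M, ∀ F ∈ s, F.RealizeAt fun _ => x := by
      intro s hs
      set f : FP L M Unit → Option M := fun F =>
        if h : ∃ j, j ∈ S ∧ i ≤ j ∧ F = inFP R (b j) then some (b h.choose) else none with hf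
      set l : List M := s.toList.filterMap f with hl
      obtain ⟨cw, hcw⟩ := hcode l
      have hmem : ∀ z ∈ l, ∃ j, j ∈ S ∧ i ≤ j ∧ z = b j := by
        intro z hz
        rw [hl, List.mem_filterMap] at hz
        obtain ⟨F', hF', hfF'⟩ := hz
        simp only [hf] at hfF'
        by_cases h : ∃ j, j ∈ S ∧ i ≤ j ∧ F' = inFP R (b j)
        · rw [dif_pos h] at hfF'
          obtain ⟨h1, h2, h3⟩ := h.choose_spec
          exact ⟨h.choose, h1, h2, (Option.some_injective _ hfF').symm⟩
        · rw [dif_neg h] at hfF'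
          exact absurd hfF' (by simp)
      refine ⟨cw, fun F hF => ?_⟩
      rcases hs hF with ⟨F₀, hF₀, rfl⟩ | ⟨j, hj, rfl⟩
      · rw [realize_gFP]
        intro z hz
        obtain ⟨j, hjS, hij, rfl⟩ := hmem z ((hcw z).mp hz)
        exact hbspec j F₀ (hpsub_mono hij hF₀)
      · show (inFP R (b j)).RealizeAt fun _ => cw
        rw [realize_inFP, hcw, hl, List.mem_filterMap]
        refine ⟨inFP R (b j), Finset.mem_toList.mpr hF, ?_⟩
        simp only [hf]
        have h : ∃ j', j' ∈ S ∧ i ≤ j' ∧ inFP R (b j) = inFP R (b j') := ⟨j, hj.1, hj.2, rfl⟩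
        rw [dif_pos h]
        obtain ⟨h1, h2, h3⟩ := h.choose_spec
        exact congrArg some (inFP_par_eq R h3).symm
    obtain ⟨y, hy⟩ := hMsat P Γ hPsmall hΓpar hΓfs
    refine ⟨y, fun F hF z hz => ?_, fun j hjS hij => ?_⟩
    · have h1 := hy (gFP R F) (Or.inl ⟨F, hF, rfl⟩)
      exact (realize_gFP R).mp h1 z hz
    · have h1 := hy (inFP R (b j)) (Or.inr ⟨j, ⟨hjS, hij⟩, rfl⟩)
      exact (realize_inFP R).mp h1
  haveI : Nonempty M := ⟨ha.choose⟩
  choose! c hc using hc_ex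
  -- the final type
  set Γf : Set (FP L M Unit) := (fun i => memFP R (c i)) '' S with hΓf
  set Pf : Set M := c '' S with hPf
  have hPfsmall : Cardinal.mk Pf < κ := lt_of_le_of_lt mk_image_le hSsmall
  have hΓfpar : ∀ F ∈ Γf, F.ParamsIn Pf := by
    rintro F ⟨i, hi, rfl⟩
    show (memFP R (c i)).ParamsIn Pf
    simp only [memFP, FP.ParamsIn]
    intro t
    have ht : t = 0 := Subsingleton.elim t 0
    rw [ht]
    simp only [Matrix.cons_val_zero]
    exact ⟨i, hi, rfl⟩
  have hΓffs : ∀ s : Finset (FP L M Unit), ↑s ⊆ Γf →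
      ∃ x : M, ∀ F ∈ s, F.RealizeAt fun _ => x := by
    intro s hs
    have hchoice : ∀ F ∈ s, ∃ i, i ∈ S ∧ F = memFP R (c i) := by
      intro F hF
      obtain ⟨i, hi, rfl⟩ := hs hF
      exact ⟨i, hi, rfl⟩
    choose g hg1 hg2 using hchoice
    set g' : FP L M Unit → κ.ord.ToType := fun F =>
      if h : F ∈ s then g F h else Classical.arbitrary _ with hg'
    obtain ⟨j, hjS, hj⟩ := hub (s.image g')
    refine ⟨b j, fun F hF => ?_⟩
    have hgF : g' F = g F hF := by simp only [hg']; rw [dif_pos hF]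
    rw [hg2 F hF]
    show (memFP R (c (g F hF))).RealizeAt fun _ => b j
    rw [realize_memFP]
    refine (hc (g F hF) (hg1 F hF)).2 j hjS ?_
    rw [← hgF]
    exact hj _ (Finset.mem_image_of_mem _ hF)
  obtain ⟨x, hx⟩ := hMsat Pf Γf hPfsmall hΓfpar hΓffs
  refine ⟨x, fun F hF => ?_⟩
  obtain ⟨j, hjS, hFj⟩ := hcover F hF
  have h1 := hx (memFP R (c j)) ⟨j, hjS, rfl⟩
  rw [realize_memFP] at h1
  exact (hc j hjS).1 F hFj x h1
end

section
/- Let κ be singular with cf(κ) > |T|, T a dependent complete first-order theory, and suppose M is an exactly κ-saturated model of T (κ-saturated but not κ⁺-saturated). Then there exist an elementary submodel N ≺ M of cardinality < κ and a set A ⊆ M of cardinality κ such that M omits some complete 1-type p over A which does not split over N; moreover p = q ↾ A for some complete 1-type q over M that does not split over N. -/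
open FirstOrder FirstOrder.Language

universe u v w

variable {L : FirstOrder.Language} {M : Type*} [L.Structure M] {α β : Type*}

/-- The structure `M` (a monster model of its theory `T`) has the independence property:
some formula `φ(x̄,ȳ)` is witnessed by tuples `ā_u` (`u ⊆ ω`) and `b̄_n` (`n < ω`) with
`φ(ā_u, b̄_n)` iff `n ∈ u`. `T` is dependent (NIP) iff this fails. -/
def HasIP (L : FirstOrder.Language) (M : Type*) [L.Structure M] : Prop :=
  ∃ (p q : ℕ) (φ : L.Formula (Fin p ⊕ Fin q)) (a : Set ℕ → Fin p → M) (b : ℕ → Fin q → M),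
    ∀ (u : Set ℕ) (n : ℕ), φ.Realize (Sum.elim (a u) (b n)) ↔ n ∈ u

lemma FP.realizeAt_neg' (F : FP L M α) (v : α → M) :
    F.neg.RealizeAt v ↔ ¬ F.RealizeAt v := by
  cases F
  simp [FP.neg, FP.RealizeAt, Formula.realize_not]

/-- singular exact saturation for dependent theories. If the monster
model is dependent, `κ` is singular with `cf(κ) > |T|`, and `M` is exactly `κ`-saturated,
then there are an elementary submodel `N ≺ M` with `|N| < κ` and a set `A ⊆ M` with
`|A| = κ` such that `M` omits some complete 1-type `p` over `A` which does not split over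
`N`; moreover `p = q ↾ A` for some complete 1-type `q` over `M` not splitting over `N`. -/
theorem statement_16 {L : FirstOrder.Language.{u, u}} {M : Type u} [L.Structure M]
    (hNIP : ¬ HasIP L M) (κ : Cardinal.{u})
    (hsing : κ.ord.cof < κ) (hcof : L.card + Cardinal.aleph0 < κ.ord.cof)
    (hsat : KSat L M κ) (hnotsat : ¬ KSat L M (Order.succ κ)) :
    ∃ (N : L.ElementarySubstructure M) (A : Set M) (p q : Set (FP L M Unit)),
      Cardinal.mk N < κ ∧ Cardinal.mk A = κ ∧
      IsCompleteTypeOver A p ∧ TypeDNSplit (N : Set M) p ∧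
      (¬ ∃ x : M, ∀ F ∈ p, F.RealizeAt fun _ => x) ∧
      IsCompleteTypeOver (Set.univ : Set M) q ∧ TypeDNSplit (N : Set M) q ∧ p ⊆ q := by
  classical
  simp only [KSat, not_forall] at hnotsat
  obtain ⟨A₀, p₀, hnotsat⟩ := hnotsat
  push_neg at hnotsat
  obtain ⟨hA₀lt, hpar, hfs, hnr⟩ := hnotsat
  -- basic cardinal facts
  have hcof_inf : Cardinal.aleph0 ≤ κ.ord.cof :=
    le_of_lt (lt_of_le_of_lt (self_le_add_left _ _) hcof)
  have hκinf : Cardinal.aleph0 ≤ κ := hcof_inf.trans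
    ((Ordinal.cof_le_card κ.ord).trans_eq (Cardinal.card_ord κ))
  have hA₀le : Cardinal.mk A₀ ≤ κ := Order.lt_succ_iff.mp hA₀lt
  have hA₀eq : Cardinal.mk A₀ = κ := by
    rcases lt_or_eq_of_le hA₀le with h | h
    · obtain ⟨x, hx⟩ := hsat A₀ p₀ h hpar hfs
      obtain ⟨F, hF, hnF⟩ := hnr x
      exact absurd (hx F hF) hnF
    · exact h
  -- enumerate A₀ along κ.ord
  obtain ⟨e⟩ : Nonempty (κ.ord.ToType ≃ ↥A₀) := by
    rw [← Cardinal.eq, hA₀eq, Cardinal.mk_ord_toType]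
  set Aset : κ.ord.ToType → Set M := fun x => (fun z => ((e z : ↥A₀) : M)) '' Set.Iio x with hAset
  have hAcard : ∀ x, Cardinal.mk (Aset x) < κ := fun x =>
    lt_of_le_of_lt Cardinal.mk_image_le (Cardinal.mk_Iio_ord_toType x)
  -- cofinal set
  haveI : IsWellOrder κ.ord.ToType (· < ·) := isWellOrder_lt
  have hlim : Order.IsSuccLimit (Ordinal.type ((· < ·) : κ.ord.ToType → κ.ord.ToType → Prop)) := by
    rw [Ordinal.type_toType]; exact Cardinal.isSuccLimit_ord hκinf
  obtain ⟨S, hSunb, hScard⟩ := Ordinal.cof_eq' ((· < ·) : κ.ord.ToType → κ.ord.ToType → Prop) hlim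
  rw [Ordinal.type_toType] at hScard
  have hA₀ne : Nonempty κ.ord.ToType := by
    rw [← Cardinal.mk_ne_zero_iff, Cardinal.mk_ord_toType]
    exact (lt_of_lt_of_le Cardinal.aleph0_pos hκinf).ne'
  have hSne : Nonempty ↥S := by
    obtain ⟨x⟩ := hA₀ne
    obtain ⟨b, hbS, _⟩ := hSunb x
    exact ⟨⟨b, hbS⟩⟩
  -- realizers
  have hreal : ∀ x : ↥S, ∃ m : M, ∀ F, F ∈ p₀ → F.ParamsIn (Aset ↑x) →
      F.RealizeAt fun _ => m := by
    intro x
    obtain ⟨m, hm⟩ := hsat (Aset ↑x) {F | F ∈ p₀ ∧ F.ParamsIn (Aset ↑x)} (hAcard _)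
      (fun F hF => hF.2)
      (fun s hs => hfs s (fun F hF => (hs hF).1))
    exact ⟨m, fun F h1 h2 => hm F ⟨h1, h2⟩⟩
  choose a ha using hreal
  -- the small submodel
  set X : Set M := Set.range a with hX
  have hXcard : Cardinal.mk X ≤ κ.ord.cof := hScard ▸ Cardinal.mk_range_le
  set κ' : Cardinal.{u} := Cardinal.mk X + (L.card + Cardinal.aleph0) with hκ'
  have hκ'inf : Cardinal.aleph0 ≤ κ' := le_trans (self_le_add_left _ _) (self_le_add_left _ _)
  have hκ'lt : κ' < κ := by
    have : κ' ≤ κ.ord.cof + κ.ord.cof := add_le_add hXcard hcof.le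
    rw [Cardinal.add_eq_self hcof_inf] at this
    exact lt_of_le_of_lt this hsing
  have hMne : Nonempty M := by
    obtain ⟨x, -⟩ := hfs ∅ (by simp)
    exact ⟨x⟩
  obtain ⟨N, hXN, hNcard⟩ := exists_elementarySubstructure_card_eq L X κ' hκ'inf
    (by simpa only [Cardinal.lift_id] using (self_le_add_right _ _ : Cardinal.mk X ≤ κ'))
    (by simpa only [Cardinal.lift_id] using
      (le_trans (self_le_add_right _ _) (self_le_add_left _ _) : L.card ≤ κ'))
    (by simpa only [Cardinal.lift_id] using
      (le_trans hκ'lt.le (hA₀eq ▸ Cardinal.mk_set_le A₀) : κ' ≤ Cardinal.mk M))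
  have hNlt : Cardinal.mk N < κ := by
    have := hNcard
    simp only [Cardinal.lift_id] at this
    rw [this]; exact hκ'lt
  -- the ultrafilter
  have : Nonempty ↥S := hSne
  set U : Ultrafilter ↥S := Ultrafilter.of Filter.atTop with hU
  have hend : ∀ b : κ.ord.ToType, {x : ↥S | b < ↑x} ∈ U := by
    intro b
    obtain ⟨x₀, hx₀S, hx₀⟩ := hSunb b
    refine Ultrafilter.of_le _ (Filter.mem_of_superset (Filter.Ici_mem_atTop (⟨x₀, hx₀S⟩ : ↥S)) ?_)
    intro y hy
    exact lt_of_lt_of_le hx₀ hy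
  -- p₀ is in the limit
  have hp₀lim : ∀ F ∈ p₀, {x : ↥S | F.RealizeAt fun _ => a x} ∈ U := by
    intro F hF
    set z : Fin F.n → κ.ord.ToType := fun i => e.symm ⟨F.par i, hpar F hF i⟩ with hz
    have hinter : {x : ↥S | ∀ i, z i < ↑x} ∈ U := by
      have : {x : ↥S | ∀ i, z i < ↑x} = ⋂ i, {x : ↥S | z i < ↑x} := by
        ext x; simp
      rw [this]
      exact (Filter.iInter_mem (f := (U : Filter ↥S))).mpr fun i => hend (z i)
    refine Filter.mem_of_superset hinter ?_
    intro x hx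
    refine ha x F hF ?_
    intro i
    refine ⟨z i, hx i, ?_⟩
    simp [hz, Equiv.apply_symm_apply]
  -- the global type
  set q : Set (FP L M Unit) := {F | {x : ↥S | F.RealizeAt fun _ => a x} ∈ U} with hq
  set p : Set (FP L M Unit) := {F | F ∈ q ∧ F.ParamsIn A₀} with hp
  have hp₀p : p₀ ⊆ p := fun F hF => ⟨hp₀lim F hF, hpar F hF⟩
  have hnegset : ∀ (F : FP L M Unit),
      {x : ↥S | F.neg.RealizeAt fun _ => a x} = {x : ↥S | F.RealizeAt fun _ => a x}ᶜ := by
    intro F; ext x; simp [FP.realizeAt_neg']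
  have hqneg : ∀ F : FP L M Unit, F ∈ q ↔ F.neg ∉ q := by
    intro F
    show _ ∈ U ↔ ¬ (_ ∈ U)
    rw [hnegset F, Ultrafilter.compl_mem_iff_notMem, not_not]
  have hqfin : ∀ s : Finset (FP L M Unit), ↑s ⊆ q → ∃ m : M, ∀ F ∈ s, F.RealizeAt fun _ => m := by
    intro s hs
    have : (⋂ F ∈ s, {x : ↥S | F.RealizeAt fun _ => a x}) ∈ U :=
      (Filter.biInter_finset_mem s).mpr (fun F hF => hs hF)
    obtain ⟨x, hx⟩ := Filter.nonempty_of_mem this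
    simp only [Set.mem_iInter] at hx
    exact ⟨a x, fun F hF => hx F hF⟩
  -- non-splitting of q
  have hqdns : TypeDNSplit (N : Set M) q := by
    intro n φ b c hb hc hsame
    have hmem : ({x : ↥S | (⟨n, φ, b⟩ : FP L M Unit).RealizeAt fun _ => a x} ∩
        {x : ↥S | (⟨n, φ.not, c⟩ : FP L M Unit).RealizeAt fun _ => a x}) ∈ U :=
      Filter.inter_mem hb hc
    obtain ⟨x, hx1, hx2⟩ := Filter.nonempty_of_mem hmem
    have h1 : φ.Realize (Sum.elim (fun _ : Unit => a x) b) := hx1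
    have h2 : ¬ φ.Realize (Sum.elim (fun _ : Unit => a x) c) := by
      have := hx2
      rw [Set.mem_setOf_eq] at this
      exact Formula.realize_not.mp this
    set g : Unit ⊕ Fin n → Fin n ⊕ Fin 1 :=
      Sum.elim (fun _ => Sum.inr 0) Sum.inl with hg
    set F' : FP L M (Fin n) := ⟨1, φ.relabel g, fun _ => a x⟩ with hF'
    have hpar' : F'.ParamsIn (N : Set M) := fun i => hXN ⟨x, rfl⟩
    have hcomp : ∀ v : Fin n → M,
        F'.RealizeAt v ↔ φ.Realize (Sum.elim (fun _ : Unit => a x) v) := by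
      intro v
      show (φ.relabel g).Realize (Sum.elim v fun _ => a x) ↔ _
      rw [Formula.realize_relabel]
      constructor <;> (intro h; convert h using 2) <;>
        (funext u; cases u <;> rfl)
    have := hsame F' hpar'
    rw [hcomp b, hcomp c] at this
    exact h2 (this.mp h1)
  refine ⟨N, A₀, p, q, hNlt, hA₀eq, ?_, ?_, ?_, ?_, ?_, ?_⟩
  · -- p complete over A₀
    refine ⟨fun F hF => hF.2, ?_, ?_⟩
    · intro F hFpar
      have hnegpar : F.neg.ParamsIn A₀ := hFpar
      constructor
      · rintro ⟨hFq, -⟩ ⟨hFnq, -⟩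
        exact ((hqneg F).mp hFq) hFnq
      · intro h
        refine ⟨?_, hFpar⟩
        rw [hqneg F]
        intro hFnq
        exact h ⟨hFnq, hnegpar⟩
    · intro s hs
      obtain ⟨m, hm⟩ := hqfin s (fun F hF => (hs hF).1)
      exact ⟨fun _ => m, hm⟩
  · -- p does not split over N
    intro n φ b c hb hc
    exact hqdns n φ b c hb.1 hc.1
  · -- p omitted
    rintro ⟨x, hx⟩
    obtain ⟨F, hF, hnF⟩ := hnr x
    exact hnF (hx F (hp₀p hF))
  · -- q complete over univ
    refine ⟨fun F _ i => Set.mem_univ _, fun F _ => hqneg F, ?_⟩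
    intro s hs
    obtain ⟨m, hm⟩ := hqfin s hs
    exact ⟨fun _ => m, hm⟩
  · exact hqdns
  · exact fun F hF => hF.1
end

section
/- Let T be a dependent complete first-order theory, κ a regular cardinal with κ > |T|, N a κ-saturated model, and q ∈ S^m(N) a complete type weakly orthogonal to every complete finite-variable type over N that does not split over a subset of N of cardinality < κ. Then for every elementary submodel M ≺ N of cardinality < κ and every formula φ(x, y) with parameters from N there are a formula ψ(x, d̄) ∈ q and a function η : M → {0,1} such that ψ(x, d̄) ⊢ {φ(x, b)^{η(b)} : b ∈ M}, where φ^1 = φ and φ^0 = ¬φ. -/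
open FirstOrder FirstOrder.Language

universe u v w

variable {L : FirstOrder.Language} {M : Type*} [L.Structure M] {α β : Type*}

/-- View a formula-with-parameters in variables `α` as one in variables `α ⊕ β`. -/
def FP.withLeft (F : FP L M α) (β : Type*) : FP L M (α ⊕ β) :=
  ⟨F.n, F.φ.relabel (Sum.map Sum.inl id), F.par⟩

/-- View a formula-with-parameters in variables `β` as one in variables `α ⊕ β`. -/
def FP.withRight (F : FP L M β) (α : Type*) : FP L M (α ⊕ β) :=
  ⟨F.n, F.φ.relabel (Sum.map Sum.inr id), F.par⟩

/-- `M` is `κ`-saturated for finite-variable types. -/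
def FinKSat (L : FirstOrder.Language) (M : Type w) [L.Structure M] (κ : Cardinal.{w}) : Prop :=
  ∀ (m : ℕ) (A : Set M) (p : Set (FP L M (Fin m))),
    Cardinal.mk A < κ → (∀ F ∈ p, F.ParamsIn A) →
    (∀ s : Finset (FP L M (Fin m)), ↑s ⊆ p → ∃ a : Fin m → M, ∀ F ∈ s, F.RealizeAt a) →
    ∃ a : Fin m → M, ∀ F ∈ p, F.RealizeAt a

/-- Two complete types over `A` are weakly orthogonal: their union has exactly one
extension to a complete type over `A` in the combined variables. -/
def WeaklyOrthogonalT (A : Set M) (q : Set (FP L M α)) (r : Set (FP L M β)) : Prop :=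
  ∃! s : Set (FP L M (α ⊕ β)), IsCompleteTypeOver A s ∧
    (∀ F ∈ q, F.withLeft β ∈ s) ∧ (∀ F ∈ r, F.withRight α ∈ s)


section Aux19

open Classical in
/-- The trivially true formula-with-parameters. -/
def FP.topFP {L : FirstOrder.Language} {M : Type*} [L.Structure M] {α : Type*} : FP L M α :=
  ⟨0, ⊤, Fin.elim0⟩

namespace Aux19

variable {L : FirstOrder.Language} {M : Type*} [L.Structure M] {α β : Type*}

theorem realizeAt_neg (F : FP L M α) (a : α → M) :
    F.neg.RealizeAt a ↔ ¬ F.RealizeAt a := by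
  simp [FP.neg, FP.RealizeAt]

theorem realizeAt_topFP (a : α → M) : (FP.topFP : FP L M α).RealizeAt a := by
  simp [FP.topFP, FP.RealizeAt]

/-- Conjunction of two formulas-with-parameters. -/
def conj2 (F G : FP L M α) : FP L M α :=
  ⟨F.n + G.n,
    (F.φ.relabel (Sum.map id (Fin.castAdd G.n))) ⊓ (G.φ.relabel (Sum.map id (Fin.natAdd F.n))),
    Fin.append F.par G.par⟩

theorem realizeAt_conj2 (F G : FP L M α) (a : α → M) :
    (conj2 F G).RealizeAt a ↔ F.RealizeAt a ∧ G.RealizeAt a := by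
  have h1 : Sum.elim a (Fin.append F.par G.par) ∘ Sum.map id (Fin.castAdd G.n)
      = Sum.elim a F.par := by
    funext x
    cases x with
    | inl v => rfl
    | inr i => simp [Function.comp, Fin.append_left]
  have h2 : Sum.elim a (Fin.append F.par G.par) ∘ Sum.map id (Fin.natAdd F.n)
      = Sum.elim a G.par := by
    funext x
    cases x with
    | inl v => rfl
    | inr i => simp [Function.comp, Fin.append_right]
  simp only [conj2, FP.RealizeAt, Formula.realize_inf, Formula.realize_relabel, h1, h2]

/-- Conjunction of a list of formulas-with-parameters. -/
def conjList : List (FP L M α) → FP L M α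
  | [] => FP.topFP
  | F :: l => conj2 F (conjList l)

theorem realizeAt_conjList (l : List (FP L M α)) (a : α → M) :
    (conjList l).RealizeAt a ↔ ∀ F ∈ l, F.RealizeAt a := by
  induction l with
  | nil => simp [conjList, realizeAt_topFP]
  | cons F l ih => simp [conjList, realizeAt_conj2, ih]

theorem IsCompleteTypeOver.nonempty' {q : Set (FP L M α)}
    (hq : IsCompleteTypeOver (Set.univ : Set M) q) : ∃ F, F ∈ q := by
  by_cases h : (FP.topFP : FP L M α) ∈ q
  · exact ⟨_, h⟩
  · refine ⟨(FP.topFP : FP L M α).neg, ?_⟩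
    by_contra hn
    exact h ((hq.2.1 _ (fun _ => trivial)).2 hn)

theorem conjList_mem {q : Set (FP L M α)} (hq : IsCompleteTypeOver (Set.univ : Set M) q)
    (s : Finset (FP L M α)) (hs : ↑s ⊆ q) : conjList s.toList ∈ q := by
  classical
  rw [hq.2.1 _ (fun _ => trivial)]
  intro hn
  have hside : ↑(insert (conjList s.toList).neg s) ⊆ q := by
    intro F hF
    simp only [Finset.coe_insert, Set.mem_insert_iff] at hF
    rcases hF with rfl | hF
    · exact hn
    · exact hs hF
  obtain ⟨a, ha⟩ := hq.2.2 (insert (conjList s.toList).neg s) hside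
  have h1 : (conjList s.toList).RealizeAt a := (realizeAt_conjList _ _).2 fun F hF =>
    ha F (Finset.mem_insert_of_mem (Finset.mem_toList.mp hF))
  have h2 := ha _ (Finset.mem_insert_self _ _)
  rw [realizeAt_neg] at h2
  exact h2 h1

/-- Finite satisfiability of a set of formulas-with-parameters. -/
def FinSatP (P : Set (FP L M α)) : Prop :=
  ∀ s : Finset (FP L M α), ↑s ⊆ P → ∃ a : α → M, ∀ F ∈ s, F.RealizeAt a

theorem exists_complete_extension {P : Set (FP L M α)} (hP : FinSatP P) :
    ∃ s : Set (FP L M α), IsCompleteTypeOver (Set.univ : Set M) s ∧ P ⊆ s := by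
  classical
  have hzorn : ∀ c ⊆ {R : Set (FP L M α) | FinSatP R}, IsChain (fun x1 x2 => x1 ⊆ x2) c →
      c.Nonempty → ∃ ub ∈ {R : Set (FP L M α) | FinSatP R}, ∀ s ∈ c, s ⊆ ub := by
    intro c hcS hchain hcne
    have key : ∀ s : Finset (FP L M α), ↑s ⊆ ⋃₀ c → ∃ t ∈ c, ↑s ⊆ t := by
      intro s
      induction s using Finset.induction_on with
      | empty =>
        intro _
        obtain ⟨t, ht⟩ := hcne
        exact ⟨t, ht, by simp⟩
      | @insert F s hFs ih =>
        intro hsub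
        obtain ⟨t, htc, hts⟩ := ih (fun x hx => hsub (by
          simp only [Finset.coe_insert, Set.mem_insert_iff]; exact Or.inr hx))
        obtain ⟨u, huc, hFu⟩ := hsub (Finset.mem_coe.mpr (Finset.mem_insert_self F s))
        rcases eq_or_ne t u with rfl | hne
        · exact ⟨t, htc, by
            intro G hG
            simp only [Finset.coe_insert, Set.mem_insert_iff] at hG
            rcases hG with rfl | hG
            · exact hFu
            · exact hts hG⟩
        · rcases hchain htc huc hne with h | h
          · exact ⟨u, huc, by
              intro G hG
              simp only [Finset.coe_insert, Set.mem_insert_iff] at hG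
              rcases hG with rfl | hG
              · exact hFu
              · exact h (hts hG)⟩
          · exact ⟨t, htc, by
              intro G hG
              simp only [Finset.coe_insert, Set.mem_insert_iff] at hG
              rcases hG with rfl | hG
              · exact h hFu
              · exact hts hG⟩
    refine ⟨⋃₀ c, ?_, fun t ht => Set.subset_sUnion_of_mem ht⟩
    intro s hs
    obtain ⟨t, htc, hts⟩ := key s hs
    exact hcS htc s hts
  obtain ⟨Q, hPQ, hQmax⟩ := zorn_subset_nonempty {R : Set (FP L M α) | FinSatP R} hzorn P hP
  · have hQS : FinSatP Q := hQmax.1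
    have hmax : ∀ R, FinSatP R → Q ⊆ R → R ⊆ Q := fun R hR hQR => hQmax.2 hR hQR
    refine ⟨Q, ⟨fun F _ _ => trivial, fun F _ => ?_, hQS⟩, hPQ⟩
    constructor
    · intro hF hFn
      have hside : ↑({F, F.neg} : Finset (FP L M α)) ⊆ Q := by
        intro G hG
        simp only [Finset.coe_insert, Finset.coe_singleton, Set.mem_insert_iff,
          Set.mem_singleton_iff] at hG
        rcases hG with rfl | rfl
        · exact hF
        · exact hFn
      obtain ⟨a, ha⟩ := hQS {F, F.neg} hside
      have h2 := ha F.neg (by simp)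
      rw [realizeAt_neg] at h2
      exact h2 (ha F (by simp))
    · intro hFn
      by_contra hF
      have h1 : ¬ FinSatP (insert F Q) := fun h =>
        hF (hmax _ h (Set.subset_insert _ _) (Set.mem_insert _ _))
      have h2 : ¬ FinSatP (insert F.neg Q) := fun h =>
        hFn (hmax _ h (Set.subset_insert _ _) (Set.mem_insert _ _))
      simp only [FinSatP, not_forall] at h1 h2
      obtain ⟨s1, hs1, hs1n⟩ := h1
      obtain ⟨s2, hs2, hs2n⟩ := h2
      have key1 : ∀ a : α → M, (∀ G ∈ s1.erase F, G.RealizeAt a) → ¬ F.RealizeAt a := by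
        intro a hreal hFa
        exact hs1n ⟨a, fun G hG => by
          rcases eq_or_ne G F with rfl | hne
          · exact hFa
          · exact hreal G (Finset.mem_erase.2 ⟨hne, hG⟩)⟩
      have key2 : ∀ a : α → M, (∀ G ∈ s2.erase F.neg, G.RealizeAt a) → F.RealizeAt a := by
        intro a hreal
        by_contra hFa
        exact hs2n ⟨a, fun G hG => by
          rcases eq_or_ne G F.neg with rfl | hne
          · rw [realizeAt_neg]; exact hFa
          · exact hreal G (Finset.mem_erase.2 ⟨hne, hG⟩)⟩
      have hsub : ↑(s1.erase F ∪ s2.erase F.neg) ⊆ Q := by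
        intro G hG
        simp only [Finset.coe_union, Set.mem_union, Finset.coe_erase, Set.mem_diff,
          Set.mem_singleton_iff] at hG
        rcases hG with ⟨hG1, hG2⟩ | ⟨hG1, hG2⟩
        · rcases hs1 hG1 with rfl | h
          · exact absurd rfl hG2
          · exact h
        · rcases hs2 hG1 with rfl | h
          · exact absurd rfl hG2
          · exact h
      obtain ⟨a, ha⟩ := hQS _ hsub
      exact key1 a (fun G hG => ha G (Finset.mem_union_left _ hG))
        (key2 a (fun G hG => ha G (Finset.mem_union_right _ hG)))

theorem realizeAt_withLeft (F : FP L M α) (a : α → M) (b : β → M) :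
    (F.withLeft β).RealizeAt (Sum.elim a b) ↔ F.RealizeAt a := by
  have h : Sum.elim (Sum.elim a b) F.par ∘ Sum.map Sum.inl id = Sum.elim a F.par := by
    funext x
    cases x with
    | inl v => rfl
    | inr i => rfl
  simp only [FP.withLeft, FP.RealizeAt, Formula.realize_relabel, h]

theorem realizeAt_withRight (F : FP L M β) (a : α → M) (b : β → M) :
    (F.withRight α).RealizeAt (Sum.elim a b) ↔ F.RealizeAt b := by
  have h : Sum.elim (Sum.elim a b) F.par ∘ Sum.map Sum.inr id = Sum.elim b F.par := by
    funext x
    cases x with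
    | inl v => rfl
    | inr i => rfl
  simp only [FP.withRight, FP.RealizeAt, Formula.realize_relabel, h]

theorem decide_formula {q : Set (FP L M α)} {r : Set (FP L M β)}
    (hq : IsCompleteTypeOver (Set.univ : Set M) q)
    (hr : IsCompleteTypeOver (Set.univ : Set M) r)
    (hwo : WeaklyOrthogonalT (Set.univ : Set M) q r)
    (G : FP L M (α ⊕ β)) :
    ∃ q0 : Finset (FP L M α), ↑q0 ⊆ q ∧ ∃ r0 : Finset (FP L M β), ↑r0 ⊆ r ∧
      ((∀ (a : α → M) (b : β → M), (∀ F ∈ q0, F.RealizeAt a) → (∀ F ∈ r0, F.RealizeAt b) →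
          G.RealizeAt (Sum.elim a b)) ∨
       (∀ (a : α → M) (b : β → M), (∀ F ∈ q0, F.RealizeAt a) → (∀ F ∈ r0, F.RealizeAt b) →
          ¬ G.RealizeAt (Sum.elim a b))) := by
  classical
  by_contra hcon
  push_neg at hcon
  obtain ⟨Fq, hFq⟩ := IsCompleteTypeOver.nonempty' hq
  obtain ⟨Fr, hFr⟩ := IsCompleteTypeOver.nonempty' hr
  set fL : FP L M (α ⊕ β) → FP L M α := fun F =>
    if h : ∃ F' ∈ q, F'.withLeft β = F then h.choose else Fq with hfL
  set fR : FP L M (α ⊕ β) → FP L M β := fun F =>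
    if h : ∃ F' ∈ r, F'.withRight α = F then h.choose else Fr with hfR
  have hfLq : ∀ F, fL F ∈ q := by
    intro F
    rw [hfL]
    by_cases h : ∃ F' ∈ q, F'.withLeft β = F
    · simp only [dif_pos h]; exact h.choose_spec.1
    · simp only [dif_neg h]; exact hFq
  have hfRr : ∀ F, fR F ∈ r := by
    intro F
    rw [hfR]
    by_cases h : ∃ F' ∈ r, F'.withRight α = F
    · simp only [dif_pos h]; exact h.choose_spec.1
    · simp only [dif_neg h]; exact hFr
  have hfLspec : ∀ F, (∃ F' ∈ q, F'.withLeft β = F) → (fL F).withLeft β = F := by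
    intro F h
    rw [hfL]; simp only [dif_pos h]; exact h.choose_spec.2
  have hfRspec : ∀ F, (∃ F' ∈ r, F'.withRight α = F) → (fR F).withRight α = F := by
    intro F h
    rw [hfR]; simp only [dif_pos h]; exact h.choose_spec.2
  set base : Set (FP L M (α ⊕ β)) :=
    ((fun F => F.withLeft β) '' q) ∪ ((fun F => F.withRight α) '' r) with hbase
  have main : ∀ (H : FP L M (α ⊕ β)),
      (∀ q0 : Finset (FP L M α), ↑q0 ⊆ q → ∀ r0 : Finset (FP L M β), ↑r0 ⊆ r →
        ∃ a b, (∀ F ∈ q0, F.RealizeAt a) ∧ (∀ F ∈ r0, F.RealizeAt b) ∧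
          H.RealizeAt (Sum.elim a b)) →
      FinSatP (insert H base) := by
    intro H hH s hs
    have hq0 : ↑(s.image fL) ⊆ q := by
      intro F hF
      simp only [Finset.coe_image, Set.mem_image] at hF
      obtain ⟨F', _, rfl⟩ := hF
      exact hfLq F'
    have hr0 : ↑(s.image fR) ⊆ r := by
      intro F hF
      simp only [Finset.coe_image, Set.mem_image] at hF
      obtain ⟨F', _, rfl⟩ := hF
      exact hfRr F'
    obtain ⟨a, b, ha, hb, hHab⟩ := hH _ hq0 _ hr0
    refine ⟨Sum.elim a b, ?_⟩
    intro F hF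
    rcases hs hF with rfl | hFb
    · exact hHab
    · rcases hFb with ⟨F', hF'q, hEq⟩ | ⟨F', hF'r, hEq⟩
      · have hex : ∃ F'' ∈ q, F''.withLeft β = F := ⟨F', hF'q, hEq⟩
        rw [← hfLspec F hex, realizeAt_withLeft]
        exact ha _ (Finset.mem_image_of_mem fL hF)
      · have hex : ∃ F'' ∈ r, F''.withRight α = F := ⟨F', hF'r, hEq⟩
        rw [← hfRspec F hex, realizeAt_withRight]
        exact hb _ (Finset.mem_image_of_mem fR hF)
  have hsat1 : FinSatP (insert G base) := by
    apply main
    intro q0 hq0 r0 hr0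
    obtain ⟨a, b, ha, hb, hGab⟩ := (hcon q0 hq0 r0 hr0).2
    exact ⟨a, b, ha, hb, hGab⟩
  have hsat2 : FinSatP (insert G.neg base) := by
    apply main
    intro q0 hq0 r0 hr0
    obtain ⟨a, b, ha, hb, hGab⟩ := (hcon q0 hq0 r0 hr0).1
    exact ⟨a, b, ha, hb, (realizeAt_neg G _).2 hGab⟩
  obtain ⟨s1, hs1comp, hs1sub⟩ := exists_complete_extension hsat1
  obtain ⟨s2, hs2comp, hs2sub⟩ := exists_complete_extension hsat2
  obtain ⟨s0, _, huniq⟩ := hwo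
  have hP1 : IsCompleteTypeOver (Set.univ : Set M) s1 ∧
      (∀ F ∈ q, F.withLeft β ∈ s1) ∧ (∀ F ∈ r, F.withRight α ∈ s1) :=
    ⟨hs1comp, fun F hF => hs1sub (Set.mem_insert_of_mem _ (Or.inl ⟨F, hF, rfl⟩)),
      fun F hF => hs1sub (Set.mem_insert_of_mem _ (Or.inr ⟨F, hF, rfl⟩))⟩
  have hP2 : IsCompleteTypeOver (Set.univ : Set M) s2 ∧
      (∀ F ∈ q, F.withLeft β ∈ s2) ∧ (∀ F ∈ r, F.withRight α ∈ s2) :=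
    ⟨hs2comp, fun F hF => hs2sub (Set.mem_insert_of_mem _ (Or.inl ⟨F, hF, rfl⟩)),
      fun F hF => hs2sub (Set.mem_insert_of_mem _ (Or.inr ⟨F, hF, rfl⟩))⟩
  have he : s1 = s2 := (huniq s1 hP1).trans (huniq s2 hP2).symm
  have hGs1 : G ∈ s1 := hs1sub (Set.mem_insert _ _)
  have hGns1 : G.neg ∈ s1 := he ▸ hs2sub (Set.mem_insert _ _)
  exact ((hs1comp.2.1 G (fun _ => trivial)).1 hGs1) hGns1

end Aux19

end Aux19

/-- Let `N` be a `κ`-saturated model of a dependent theory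
(`κ > |T|` regular) and `q ∈ Sᵐ(N)` weakly orthogonal to every complete finite-variable
type over `N` which does not split over a subset of `N` of cardinality `< κ`. Then for
every elementary submodel `M ≺ N` of cardinality `< κ` and every formula `φ(x̄, y)` with
parameters from `N`, there are `ψ(x̄, d̄) ∈ q` and `η : M → 2` such that
`ψ(x̄, d̄) ⊢ {φ(x̄, b)^{η(b)} : b ∈ M}`. -/
theorem statement_19 {L : FirstOrder.Language.{u, u}} {N : Type u} [L.Structure N]
    (hNIP : ¬ HasIP L N) (κ : Cardinal.{u}) (hreg : κ.IsRegular)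
    (hT : L.card + Cardinal.aleph0 < κ) (hsat : FinKSat L N κ) (m : ℕ)
    (q : Set (FP L N (Fin m))) (hq : IsCompleteTypeOver (Set.univ : Set N) q)
    (hwo : ∀ (k : ℕ) (r : Set (FP L N (Fin k))),
      IsCompleteTypeOver (Set.univ : Set N) r →
      (∃ B : Set N, Cardinal.mk B < κ ∧ TypeDNSplit B r) →
      WeaklyOrthogonalT (Set.univ : Set N) q r) :
    ∀ Msub : L.ElementarySubstructure N, Cardinal.mk Msub < κ →
      ∀ (k : ℕ) (φ : L.Formula ((Fin m ⊕ Unit) ⊕ Fin k)) (e : Fin k → N),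
        ∃ F ∈ q, ∃ η : N → Bool,
          ∀ b ∈ Msub, ∀ a : Fin m → N, F.RealizeAt a →
            (φ.Realize (Sum.elim (Sum.elim a fun _ : Unit => b) e) ↔ η b = true) := by
  classical
  intro Msub hMcard k φ e
  obtain ⟨Fq, hFq⟩ := Aux19.IsCompleteTypeOver.nonempty' hq
  by_cases hne : Nonempty ↥Msub
  case neg =>
    refine ⟨Fq, hFq, fun _ => true, ?_⟩
    intro b hb
    exact absurd (Nonempty.intro (⟨b, hb⟩ : Msub)) hne
  -- The target formula, packaged as a formula-with-parameters in variables `Fin m ⊕ Fin 1`.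
  set G : FP L N (Fin m ⊕ Fin 1) :=
    ⟨k, φ.relabel (Sum.map (Sum.map id (fun _ : Unit => (0 : Fin 1))) id), e⟩ with hGdef
  have hG : ∀ (a : Fin m → N) (b : N),
      G.RealizeAt (Sum.elim a (fun _ : Fin 1 => b)) ↔
        φ.Realize (Sum.elim (Sum.elim a fun _ : Unit => b) e) := by
    intro a b
    have h : Sum.elim (Sum.elim a fun _ : Fin 1 => b) e ∘
        (Sum.map (Sum.map id (fun _ : Unit => (0 : Fin 1))) id)
        = Sum.elim (Sum.elim a fun _ : Unit => b) e := by
      funext x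
      rcases x with (x | x) | x <;> rfl
    rw [hGdef]
    simp only [FP.RealizeAt, Formula.realize_relabel]
    rw [h]
  -- The average type of an ultrafilter on Msub.
  set rD : Ultrafilter ↥Msub → Set (FP L N (Fin 1)) := fun D =>
    {F | {b : ↥Msub | F.RealizeAt (fun _ => (b : N))} ∈ D} with hrDdef
  have hrD_comp : ∀ D, IsCompleteTypeOver (Set.univ : Set N) (rD D) := by
    intro D
    refine ⟨fun F _ _ => trivial, ?_, ?_⟩
    · intro F _
      have hc : {b : ↥Msub | F.neg.RealizeAt (fun _ => (b : N))}
          = {b : ↥Msub | F.RealizeAt (fun _ => (b : N))}ᶜ := by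
        ext b
        simp [Aux19.realizeAt_neg]
      show _ ∈ D ↔ ¬ _ ∈ D
      rw [hc, Ultrafilter.compl_mem_iff_notMem]
      exact not_not.symm
    · intro s hs
      have hmem : (⋂ F ∈ s, {b : ↥Msub | F.RealizeAt fun _ => (b : N)}) ∈ D :=
        (Filter.biInter_finset_mem s).2 fun F hF => hs hF
      obtain ⟨b, hb⟩ := Ultrafilter.nonempty_of_mem hmem
      exact ⟨fun _ => (b : N), fun F hF => Set.mem_iInter₂.1 hb F hF⟩
  have hrD_dns : ∀ D, TypeDNSplit (Msub : Set N) (rD D) := by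
    intro D n ψ bb cc hbb hcc hsame
    have hinter : ({b : ↥Msub | FP.RealizeAt ⟨n, ψ, bb⟩ (fun _ => (b : N))} ∩
        {b : ↥Msub | FP.RealizeAt ⟨n, ψ.not, cc⟩ (fun _ => (b : N))}) ∈ D :=
      Filter.inter_mem hbb hcc
    obtain ⟨b0, hb01, hb02⟩ := Ultrafilter.nonempty_of_mem hinter
    have hdist := hsame ⟨1, ψ.relabel Sum.swap, fun _ => (b0 : N)⟩ (fun _ => b0.2)
    have hcomp : ∀ t : Fin n → N,
        FP.RealizeAt (⟨1, ψ.relabel Sum.swap, fun _ => (b0 : N)⟩ : FP L N (Fin n)) t ↔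
          ψ.Realize (Sum.elim (fun _ : Fin 1 => (b0 : N)) t) := by
      intro t
      have h : Sum.elim t (fun _ : Fin 1 => (b0 : N)) ∘ Sum.swap
          = Sum.elim (fun _ : Fin 1 => (b0 : N)) t := by
        funext x
        rcases x with x | x <;> rfl
      simp only [FP.RealizeAt, Formula.realize_relabel]
      rw [h]
    rw [hcomp, hcomp] at hdist
    have h1 : ψ.Realize (Sum.elim (fun _ : Fin 1 => (b0 : N)) bb) := hb01
    have h2 : ¬ ψ.Realize (Sum.elim (fun _ : Fin 1 => (b0 : N)) cc) := by
      have := hb02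
      simpa [FP.RealizeAt, Formula.realize_not] using this
    exact h2 (hdist.1 h1)
  have hwoD : ∀ D, WeaklyOrthogonalT (Set.univ : Set N) q (rD D) := fun D =>
    hwo 1 (rD D) (hrD_comp D) ⟨(Msub : Set N), hMcard, hrD_dns D⟩
  have perD : ∀ D : Ultrafilter ↥Msub, ∃ ψ, ψ ∈ q ∧ ∃ ε : Bool, ∃ U : Set ↥Msub, U ∈ D ∧
      ∀ b ∈ U, ∀ a : Fin m → N, ψ.RealizeAt a →
        (G.RealizeAt (Sum.elim a (fun _ : Fin 1 => (b : N))) ↔ ε = true) := by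
    intro D
    obtain ⟨q0, hq0, r0, hr0, hdec⟩ := Aux19.decide_formula hq (hrD_comp D) (hwoD D) G
    refine ⟨Aux19.conjList q0.toList, Aux19.conjList_mem hq q0 hq0, ?_⟩
    have hUD : (⋂ F ∈ r0, {b : ↥Msub | F.RealizeAt fun _ => (b : N)}) ∈ D :=
      (Filter.biInter_finset_mem r0).2 fun F hF => hr0 hF
    have hreal : ∀ (b : ↥Msub), b ∈ (⋂ F ∈ r0, {b : ↥Msub | F.RealizeAt fun _ => (b : N)}) →
        ∀ F ∈ r0, F.RealizeAt (fun _ : Fin 1 => (b : N)) :=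
      fun b hb F hF => Set.mem_iInter₂.1 hb F hF
    have hconj : ∀ a : Fin m → N, (Aux19.conjList q0.toList).RealizeAt a →
        ∀ F ∈ q0, F.RealizeAt a := fun a ha F hF =>
      (Aux19.realizeAt_conjList _ _).1 ha F (Finset.mem_toList.2 hF)
    rcases hdec with h | h
    · refine ⟨true, _, hUD, ?_⟩
      intro b hb a ha
      simp only [iff_true]
      exact h a (fun _ => (b : N)) (hconj a ha) (hreal b hb)
    · refine ⟨false, _, hUD, ?_⟩
      intro b hb a ha
      simp only [Bool.false_eq_true, iff_false]
      exact h a (fun _ => (b : N)) (hconj a ha) (hreal b hb)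
  choose ψf hψfq εf Uf hUfD hprop using perD
  -- Compactness of the ultrafilter space: finitely many of the U's cover Msub.
  have cover : ∃ t : Finset (Ultrafilter ↥Msub), ∀ b : ↥Msub, ∃ D ∈ t, b ∈ Uf D := by
    by_contra hcov
    push_neg at hcov
    have hFIP : ∀ T : Finset (Set ↥Msub),
        (↑T : Set (Set ↥Msub)) ⊆ Set.range (fun D => (Uf D)ᶜ) →
        (⋂₀ (↑T : Set (Set ↥Msub))).Nonempty := by
      intro T hT
      have hch : ∀ x ∈ T, ∃ D, (Uf D)ᶜ = x := fun x hx => hT hx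
      choose g hg using hch
      obtain ⟨b, hb⟩ := hcov (T.attach.image fun x : {y : Set ↥Msub // y ∈ T} => g x.1 x.2)
      refine ⟨b, ?_⟩
      rw [Set.mem_sInter]
      intro x hxT
      have hx : x ∈ T := hxT
      have hbn : b ∉ Uf (g x hx) :=
        hb (g x hx) (Finset.mem_image.2 ⟨⟨x, hx⟩, Finset.mem_attach _ _, rfl⟩)
      rw [← hg x hx]
      exact hbn
    obtain ⟨Dstar, hD⟩ := Ultrafilter.exists_ultrafilter_of_finite_inter_nonempty _ hFIP
    have h1 : (Uf Dstar)ᶜ ∈ Dstar := hD (Set.mem_range_self Dstar)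
    exact (Ultrafilter.compl_mem_iff_notMem.1 h1) (hUfD Dstar)
  obtain ⟨t, hcov⟩ := cover
  have hQ0 : ↑(t.image ψf) ⊆ q := by
    intro F hF
    simp only [Finset.coe_image, Set.mem_image] at hF
    obtain ⟨D, _, rfl⟩ := hF
    exact hψfq D
  refine ⟨Aux19.conjList (t.image ψf).toList, Aux19.conjList_mem hq _ hQ0, ?_⟩
  set η : N → Bool := fun b =>
    if h : ∃ D, D ∈ t ∧ ∃ hb : b ∈ Msub, (⟨b, hb⟩ : ↥Msub) ∈ Uf D then εf h.choose
    else true with hηdef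
  refine ⟨η, ?_⟩
  intro b hb a ha
  have hex : ∃ D, D ∈ t ∧ ∃ hb' : b ∈ Msub, (⟨b, hb'⟩ : ↥Msub) ∈ Uf D := by
    obtain ⟨D, hD, hbD⟩ := hcov ⟨b, hb⟩
    exact ⟨D, hD, hb, hbD⟩
  have hη : η b = εf hex.choose := by
    rw [hηdef]
    simp only [dif_pos hex]
  obtain ⟨hDt, hb', hbU⟩ := hex.choose_spec
  have hψ : (ψf hex.choose).RealizeAt a :=
    (Aux19.realizeAt_conjList _ _).1 ha (ψf hex.choose)
      (Finset.mem_toList.2 (Finset.mem_image_of_mem ψf hDt))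
  have hmain := hprop hex.choose ⟨b, hb'⟩ hbU a hψ
  rw [hη, ← hG a b]
  exact hmain
end
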